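/- Under the exact exponential update ψ_{k+1} = exp(t[H,ψ_k]) ψ_k exp(-t[H,ψ_k]) with step size t, the overlap q_k = tr(Hψ_k) satisfies the closed-form recursion arising from a rotation by angle γ_k t in the Grover plane: writing q_k = cos²(θ_k) with θ_k ∈ [0, π/2], one has θ_{k+1} = θ_k - γ_k t where γ_k = √(q_k(1-q_k)), provided θ_k - γ_k t ∈ [0, π/2]. -/

import Mathlib

open Matrix Real


lemma exp_mulVec_eigen {n : ℕ} (M : Matrix (Fin n) (Fin n) ℂ) (x : Fin n → ℂ) (c : ℂ)
    (h : M *ᵥ x = c • x) :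
    NormedSpace.exp M *ᵥ x = Complex.exp c • x := by
  letI : SeminormedRing (Matrix (Fin n) (Fin n) ℂ) := Matrix.linftyOpSemiNormedRing
  letI : NormedRing (Matrix (Fin n) (Fin n) ℂ) := Matrix.linftyOpNormedRing
  letI : NormedAlgebra ℂ (Matrix (Fin n) (Fin n) ℂ) := Matrix.linftyOpNormedAlgebra
  have hpow : ∀ k : ℕ, M ^ k *ᵥ x = c ^ k • x := by
    intro k; induction k with
    | zero => simp
    | succ k ih => rw [pow_succ', pow_succ', ← mulVec_mulVec, ih, mulVec_smul, h, smul_smul, mul_comm]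
  let L : Matrix (Fin n) (Fin n) ℂ →ₗ[ℂ] (Fin n → ℂ) :=
    { toFun := fun A => A *ᵥ x
      map_add' := fun A B => add_mulVec A B x
      map_smul' := fun r A => smul_mulVec r A x }
  let L' : Matrix (Fin n) (Fin n) ℂ →L[ℂ] (Fin n → ℂ) :=
    ⟨L, L.continuous_of_finiteDimensional⟩
  have hsum : HasSum (fun k : ℕ => ((k.factorial : ℂ))⁻¹ • M ^ k) (NormedSpace.exp M) :=
    NormedSpace.exp_series_hasSum_exp' M
  have h1 : HasSum (fun k : ℕ => L' (((k.factorial : ℂ))⁻¹ • M ^ k))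
      (L' (NormedSpace.exp M)) := L'.hasSum hsum
  have h2 : HasSum (fun k : ℕ => (((k.factorial : ℂ))⁻¹ * c ^ k) • x)
      (Complex.exp c • x) := by
    have := (NormedSpace.exp_series_hasSum_exp' (𝕂 := ℂ) c).smul_const x
    simpa [smul_smul, ← Complex.exp_eq_exp_ℂ] using this
  have h3 : (fun k : ℕ => L' (((k.factorial : ℂ))⁻¹ • M ^ k))
      = fun k : ℕ => (((k.factorial : ℂ))⁻¹ * c ^ k) • x := by
    funext k
    have : L' (((k.factorial : ℂ))⁻¹ • M ^ k) = ((k.factorial : ℂ))⁻¹ • (M ^ k *ᵥ x) := by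
      exact smul_mulVec ((k.factorial : ℂ))⁻¹ (M ^ k) x
    rw [this, hpow, smul_smul]
  rw [h3] at h1
  exact h1.unique h2

lemma vecMulVec_mulVec' {N : ℕ} (ψ x : Fin N → ℂ) :
    vecMulVec ψ (star ψ) *ᵥ x = (star ψ ⬝ᵥ x) • ψ := by
  ext i
  simp only [mulVec, dotProduct, vecMulVec_apply, Pi.smul_apply, smul_eq_mul, Pi.star_apply]
  rw [Finset.sum_mul]
  exact Finset.sum_congr rfl fun j _ => by ring

/-- Closed-form angle recursion for the exact exponential update: writing
`q = cos²θ` with `θ ∈ [0, π/2]`, one step of `ψ ↦ exp(t[H,ψ]) ψ exp(-t[H,ψ])`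
moves the angle to `θ - γt`, where `γ = √(q(1-q))`, provided `θ - γt ∈ [0, π/2]`. -/
theorem stmt_12 (N : ℕ) (H : Matrix (Fin N) (Fin N) ℂ)
    (hH : Hᴴ = H) (hH2 : H * H = H)
    (ψ : Fin N → ℂ) (hψ : star ψ ⬝ᵥ ψ = 1)
    (t q γ : ℝ)
    (hq : (q : ℂ) = star ψ ⬝ᵥ (H *ᵥ ψ)) (hq0 : 0 < q) (hq1 : q < 1)
    (hγ : γ = Real.sqrt (q * (1 - q)))
    (ψ' : Fin N → ℂ)
    (hψ' : ψ' = NormedSpace.exp (t •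
        (H * vecMulVec ψ (star ψ) - vecMulVec ψ (star ψ) * H)) *ᵥ ψ)
    (q' : ℝ) (hq' : (q' : ℂ) = star ψ' ⬝ᵥ (H *ᵥ ψ'))
    (θ θ' : ℝ)
    (hθ : θ ∈ Set.Icc 0 (π / 2)) (hcos : Real.cos θ = Real.sqrt q)
    (hθ' : θ' ∈ Set.Icc 0 (π / 2)) (hcos' : Real.cos θ' = Real.sqrt q')
    (hrange : θ - γ * t ∈ Set.Icc 0 (π / 2)) :
    θ' = θ - γ * t := by

  set φ : Fin N → ℂ := H *ᵥ ψ with hφ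
  have hγ0 : 0 < γ := hγ ▸ Real.sqrt_pos.2 (by nlinarith)
  have hγ2 : γ ^ 2 = q * (1 - q) := by rw [hγ]; exact Real.sq_sqrt (by nlinarith)
  have hgc : (γ : ℂ) ≠ 0 := by exact_mod_cast hγ0.ne'
  set χ : Fin N → ℂ := (γ : ℂ)⁻¹ • (φ - (q : ℂ) • ψ) with hχ
  -- dot product facts
  have d2 : star ψ ⬝ᵥ φ = (q : ℂ) := hq.symm
  have d3 : star φ ⬝ᵥ ψ = (q : ℂ) := by
    rw [star_dotProduct, d2, Complex.star_def, Complex.conj_ofReal]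
  have hHφ : H *ᵥ φ = φ := by rw [hφ, mulVec_mulVec, hH2]
  have d4 : star φ ⬝ᵥ φ = (q : ℂ) := by
    rw [hφ, star_mulVec, ← dotProduct_mulVec, mulVec_mulVec, hH, hH2, ← hq]
  -- star χ
  have hstarχ : star χ = (γ : ℂ)⁻¹ • (star φ - (q : ℂ) • star ψ) := by
    rw [hχ]
    simp [star_smul, star_sub, Complex.star_def, Complex.conj_ofReal]
  -- H acting on χ
  have hHχ : H *ᵥ χ = (((1 - q) / γ : ℝ) : ℂ) • φ := by
    rw [hχ, mulVec_smul, mulVec_sub, hHφ, mulVec_smul, ← hφ]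
    push_cast
    rw [div_eq_inv_mul]
    module
  -- dot facts with χ
  have hqγ : ((1 - q) / γ) * q = γ := by
    field_simp
    nlinarith [hγ2]
  have e2 : star ψ ⬝ᵥ (H *ᵥ χ) = (γ : ℂ) := by
    rw [hHχ, dotProduct_smul, d2, smul_eq_mul, ← Complex.ofReal_mul, hqγ]
  have hqq : (q : ℂ) - q * q = (γ : ℂ) * γ := by
    have : q - q * q = γ * γ := by nlinarith [hγ2]
    exact_mod_cast this
  have e3 : star χ ⬝ᵥ φ = (γ : ℂ) := by
    rw [hstarχ, smul_dotProduct, sub_dotProduct, smul_dotProduct, d4, d2,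
      smul_eq_mul, smul_eq_mul, hqq, inv_mul_cancel_left₀ hgc]
  have e4 : star χ ⬝ᵥ (H *ᵥ χ) = ((1 - q : ℝ) : ℂ) := by
    rw [hHχ, dotProduct_smul, e3, smul_eq_mul, ← Complex.ofReal_mul,
      div_mul_cancel₀ _ hγ0.ne']
  -- the generator
  set P : Matrix (Fin N) (Fin N) ℂ := vecMulVec ψ (star ψ) with hP
  set A : Matrix (Fin N) (Fin N) ℂ := t • (H * P - P * H) with hA
  have hPψ : P *ᵥ ψ = ψ := by rw [hP, vecMulVec_mulVec', hψ, one_smul]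
  have hPφ : P *ᵥ φ = (q : ℂ) • ψ := by rw [hP, vecMulVec_mulVec', d2]
  have hAψ : A *ᵥ ψ = ((γ : ℂ) * t) • χ := by
    rw [hA, smul_mulVec, sub_mulVec, ← mulVec_mulVec, ← mulVec_mulVec,
      hPψ, ← hφ, hPφ, hχ]
    rw [smul_smul]
    match_scalars <;> field_simp [Complex.coe_algebraMap] <;> simp [Complex.coe_algebraMap] <;> ring
  have hAφ : A *ᵥ φ = ((q : ℂ) * t) • (φ - ψ) := by
    have h1 : (H * P) *ᵥ φ = (q : ℂ) • φ := by
      rw [← mulVec_mulVec, hPφ, mulVec_smul, ← hφ]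
    have h2 : (P * H) *ᵥ φ = (q : ℂ) • ψ := by
      rw [← mulVec_mulVec, hHφ, hPφ]
    rw [hA, smul_mulVec, sub_mulVec, h1, h2]
    match_scalars <;> field_simp [Complex.coe_algebraMap] <;> simp [Complex.coe_algebraMap] <;> ring
  have hAχ : A *ᵥ χ = (-((γ : ℂ) * t)) • ψ := by
    rw [hχ, mulVec_smul, mulVec_sub, hAφ, mulVec_smul, hAψ, hχ]
    match_scalars
    · field_simp [Complex.coe_algebraMap]; simp
    · field_simp [Complex.coe_algebraMap]
      first
        | linear_combination (↑t : ℂ) * hqq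
        | linear_combination (-↑t : ℂ) * hqq
        | linear_combination ((↑t : ℂ) * ↑γ) * hqq
        | linear_combination (-(↑t : ℂ) * ↑γ) * hqq
        | ring
  set a : ℝ := γ * t with ha
  have hp : A *ᵥ (ψ + Complex.I • χ) =
      (-((γ : ℂ) * t) * Complex.I) • (ψ + Complex.I • χ) := by
    rw [mulVec_add, mulVec_smul, hAψ, hAχ]
    match_scalars <;> ring_nf <;> simp [Complex.I_sq] <;> ring
  have hm : A *ᵥ (ψ - Complex.I • χ) =
      (((γ : ℂ) * t) * Complex.I) • (ψ - Complex.I • χ) := by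
    rw [mulVec_sub, mulVec_smul, hAψ, hAχ]
    match_scalars <;> ring_nf <;> simp [Complex.I_sq] <;> ring
    -- exponential action on eigenvectors
  have hexp_p : NormedSpace.exp A *ᵥ (ψ + Complex.I • χ)
      = Complex.exp (-((γ : ℂ) * t) * Complex.I) • (ψ + Complex.I • χ) :=
    exp_mulVec_eigen A _ _ hp
  have hexp_m : NormedSpace.exp A *ᵥ (ψ - Complex.I • χ)
      = Complex.exp (((γ : ℂ) * t) * Complex.I) • (ψ - Complex.I • χ) :=
    exp_mulVec_eigen A _ _ hm
  have hψdec : ψ = (1/2 : ℂ) • ((ψ + Complex.I • χ) + (ψ - Complex.I • χ)) := by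
    module
  have he1 : Complex.exp (-((γ : ℂ) * t) * Complex.I)
      = (Real.cos a : ℂ) - (Real.sin a : ℂ) * Complex.I := by
    rw [show -((γ : ℂ) * t) = ((-a : ℝ) : ℂ) by push_cast [ha]; ring,
      Complex.exp_mul_I, ← Complex.ofReal_cos, ← Complex.ofReal_sin,
      Real.cos_neg, Real.sin_neg]
    push_cast; ring
  have he2 : Complex.exp (((γ : ℂ) * t) * Complex.I)
      = (Real.cos a : ℂ) + (Real.sin a : ℂ) * Complex.I := by
    rw [show ((γ : ℂ) * t) = ((a : ℝ) : ℂ) by push_cast [ha]; ring,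
      Complex.exp_mul_I, ← Complex.ofReal_cos, ← Complex.ofReal_sin]
  have hψ'2 : ψ' = (Real.cos a : ℂ) • ψ + (Real.sin a : ℂ) • χ := by
    rw [hψ']
    conv_lhs => rw [hψdec]
    rw [mulVec_smul, mulVec_add, hexp_p, hexp_m, he1, he2]
    match_scalars
    · linear_combination (Complex.sin (((γ * t : ℝ)) : ℂ) * ((γ : ℝ) : ℂ)⁻¹ * (q : ℂ)) *
        Complex.I_sq
    · linear_combination (-(Complex.sin (((γ * t : ℝ)) : ℂ) * ((γ : ℝ) : ℂ)⁻¹)) *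
        Complex.I_sq
  -- the new overlap
  have hq'c : (q' : ℂ) = ((Real.cos a) ^ 2 * q + 2 * Real.cos a * Real.sin a * γ
      + (Real.sin a) ^ 2 * (1 - q) : ℝ) := by
    rw [hq', hψ'2]
    simp only [star_add, star_smul, Complex.star_def, Complex.conj_ofReal,
      mulVec_add, mulVec_smul, add_dotProduct, smul_dotProduct,
      dotProduct_add, dotProduct_smul, smul_eq_mul, ← hφ]
    rw [d2, e3, e2, e4]
    push_cast
    ring
  have hq'r : q' = (Real.cos a) ^ 2 * q + 2 * Real.cos a * Real.sin a * γ
      + (Real.sin a) ^ 2 * (1 - q) := by exact_mod_cast hq'c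
  have hcθ2 : Real.cos θ ^ 2 = q := by rw [hcos]; exact Real.sq_sqrt hq0.le
  have hsθ0 : 0 ≤ Real.sin θ :=
    Real.sin_nonneg_of_nonneg_of_le_pi hθ.1 (hθ.2.trans (by linarith [Real.pi_pos]))
  have hsθ2 : Real.sin θ ^ 2 = 1 - q := by nlinarith [Real.sin_sq_add_cos_sq θ]
  have hγcs : γ = Real.cos θ * Real.sin θ := by
    rw [hγ, Real.sqrt_mul hq0.le, ← hcos,
      show (1 - q) = Real.sin θ ^ 2 from hsθ2.symm, Real.sqrt_sq hsθ0]
  have hkey : q' = Real.cos (θ - a) ^ 2 := by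
    rw [Real.cos_sub, hq'r, show (1 - q) = Real.sin θ ^ 2 from hsθ2.symm,
      ← hcθ2, hγcs]
    ring
  have hca : 0 ≤ Real.cos (θ - a) :=
    Real.cos_nonneg_of_mem_Icc ⟨by linarith [hrange.1, Real.pi_pos], hrange.2⟩
  have hcc : Real.cos θ' = Real.cos (θ - a) := by
    rw [hcos', hkey, Real.sqrt_sq hca]
  exact Real.injOn_cos ⟨hθ'.1, hθ'.2.trans (by linarith [Real.pi_pos])⟩
    ⟨hrange.1, hrange.2.trans (by linarith [Real.pi_pos])⟩ hcc
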